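/- In the standing setup with G, u_X, φ and φ̄ as defined, the family γ = (γ^{(a)}) is a unitary 2-modification φ̄ ⊗ φ ⇛ ψ: sup_a ‖γ^{(a)}‖ < ∞ and for every 1-cell X ∈ C₁(a,b), (id_{F(X)} ⊠ γ^{(a)}) ∘ (φ̄_X ⊠ id_{x_a}) ∘ (id_{x̄_b} ⊠ φ_X) = ψ_X ∘ (γ^{(b)} ⊠ id_{F(X)}). Since γ also intertwines the multiplications and units, (ψ, m, i) and φ̄ ⊗ φ (with multiplication id_{φ̄} ⊗ ε ⊗ id_φ and unit η) are isomorphic as Q-systems in End_{Fun(C,D)}(F). -/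

import Mathlib

/-!
Self-contained background for formalizing results from
"Q-system completion of C*-2-categories of 2-functors".

We model a strict C*-2-category as a (Mathlib) bicategory which is `Bicategory.Strict`,
together with a `CStarStruct`: a star operation and a norm on 2-cells, compatible with
the vertical composition and the horizontal whiskerings.
-/

open CategoryTheory

infixr:81 " ◁ " => CategoryTheory.Bicategory.whiskerLeft
infixl:81 " ▷ " => CategoryTheory.Bicategory.whiskerRight
notation "α_" => CategoryTheory.Bicategory.associator
notation "λ_" => CategoryTheory.Bicategory.leftUnitor
notation "ρ_" => CategoryTheory.Bicategory.rightUnitor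

universe w₁ v₁ u₁ w₂ v₂ u₂

/-- A C*-structure on a bicategory: each hom-category is a C*-category.  We record the
star operation and the norm on 2-cells together with their compatibilities. -/
class CStarStruct (B : Type u₁) [Bicategory.{w₁, v₁} B] where
  star : ∀ {a b : B} {f g : a ⟶ b}, (f ⟶ g) → (g ⟶ f)
  nrm : ∀ {a b : B} {f g : a ⟶ b}, (f ⟶ g) → ℝ
  star_star : ∀ {a b : B} {f g : a ⟶ b} (η : f ⟶ g), star (star η) = η
  star_id : ∀ {a b : B} (f : a ⟶ b), star (𝟙 f) = 𝟙 f
  star_comp : ∀ {a b : B} {f g h : a ⟶ b} (η : f ⟶ g) (θ : g ⟶ h),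
    star (η ≫ θ) = star θ ≫ star η
  star_whiskerLeft : ∀ {a b c : B} (f : a ⟶ b) {g h : b ⟶ c} (η : g ⟶ h),
    star (f ◁ η) = f ◁ star η
  star_whiskerRight : ∀ {a b c : B} {f g : a ⟶ b} (η : f ⟶ g) (h : b ⟶ c),
    star (η ▷ h) = star η ▷ h
  nrm_nonneg : ∀ {a b : B} {f g : a ⟶ b} (η : f ⟶ g), 0 ≤ nrm η
  nrm_star : ∀ {a b : B} {f g : a ⟶ b} (η : f ⟶ g), nrm (star η) = nrm η
  nrm_comp_le : ∀ {a b : B} {f g h : a ⟶ b} (η : f ⟶ g) (θ : g ⟶ h),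
    nrm (η ≫ θ) ≤ nrm η * nrm θ
  nrm_cstar : ∀ {a b : B} {f g : a ⟶ b} (η : f ⟶ g),
    nrm (η ≫ star η) = nrm η * nrm η

section Basics

variable {B : Type u₁} [Bicategory.{w₁, v₁} B] [CStarStruct B]

/-- The star (adjoint) of a 2-cell. -/
abbrev star2 {a b : B} {f g : a ⟶ b} (η : f ⟶ g) : g ⟶ f := CStarStruct.star η

/-- The norm of a 2-cell. -/
abbrev norm2 {a b : B} {f g : a ⟶ b} (η : f ⟶ g) : ℝ := CStarStruct.nrm η

/-- A 2-cell `u : f ⟶ g` is unitary if `u u* = id` and `u* u = id`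
(composites written diagrammatically). -/
def IsUnitary {a b : B} {f g : a ⟶ b} (u : f ⟶ g) : Prop :=
  u ≫ star2 u = 𝟙 f ∧ star2 u ≫ u = 𝟙 g

/-- A projection 2-cell: `p² = p = p*`. -/
def IsProjection {a b : B} {f : a ⟶ b} (p : f ⟶ f) : Prop :=
  p ≫ p = p ∧ star2 p = p

end Basics

/-- A C*-2-category is locally orthogonal projection complete if every projection
2-cell `p` on a 1-cell `f` splits as `p = v v*` with `v` an isometry (`v* v = id`). -/
def LocProjComplete (B : Type u₁) [Bicategory.{w₁, v₁} B] [CStarStruct B] : Prop :=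
  ∀ {a b : B} (f : a ⟶ b) (p : f ⟶ f), IsProjection p →
    ∃ (g : a ⟶ b) (v : g ⟶ f), v ≫ star2 v = 𝟙 g ∧ star2 v ≫ v = p

section QSystems

variable {B : Type u₁} [Bicategory.{w₁, v₁} B] [CStarStruct B]

/-- The Q-system axioms for a 1-cell `Q : b ⟶ b` with multiplication `m` and unit `i`:
associativity, (left and right) unitality, the Frobenius condition (both versions)
and separability. -/
def IsQSystem {b : B} (Q : b ⟶ b) (m : Q ≫ Q ⟶ Q) (i : 𝟙 b ⟶ Q) : Prop :=
  ((m ▷ Q) ≫ m = (α_ Q Q Q).hom ≫ (Q ◁ m) ≫ m) ∧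
  ((i ▷ Q) ≫ m = (λ_ Q).hom) ∧
  ((Q ◁ i) ≫ m = (ρ_ Q).hom) ∧
  (m ≫ star2 m = (star2 m ▷ Q) ≫ (α_ Q Q Q).hom ≫ (Q ◁ m)) ∧
  (m ≫ star2 m = (Q ◁ star2 m) ≫ (α_ Q Q Q).inv ≫ (m ▷ Q)) ∧
  (star2 m ≫ m = 𝟙 Q)

/-- `(x, xb)` is a dual pair with evaluation `ε` and coevaluation `η` satisfying the
zig-zag identities, and the duality is unitarily separable: `ε ∘ ε* = id`. -/
def IsUnitarySepDual {e c : B} (x : e ⟶ c) (xb : c ⟶ e)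
    (ε : xb ≫ x ⟶ 𝟙 c) (η : 𝟙 e ⟶ x ≫ xb) : Prop :=
  ((λ_ x).inv ≫ (η ▷ x) ≫ (α_ x xb x).hom ≫ (x ◁ ε) ≫ (ρ_ x).hom = 𝟙 x) ∧
  ((ρ_ xb).inv ≫ (xb ◁ η) ≫ (α_ xb x xb).inv ≫ (ε ▷ xb) ≫ (λ_ xb).hom = 𝟙 xb) ∧
  (star2 ε ≫ ε = 𝟙 (𝟙 c))

/-- The canonical multiplication `id ⊠ ε ⊠ id` on the 1-cell `x ≫ xb` determined
by a dual pair. -/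
def dualMult {e c : B} (x : e ⟶ c) (xb : c ⟶ e) (ε : xb ≫ x ⟶ 𝟙 c) :
    (x ≫ xb) ≫ (x ≫ xb) ⟶ x ≫ xb :=
  (α_ x xb (x ≫ xb)).hom ≫ (x ◁ ((α_ xb x xb).inv ≫ (ε ▷ xb) ≫ (λ_ xb).hom))

/-- The canonical comultiplication `id ⊠ ε* ⊠ id` on the 1-cell `x ≫ xb` determined
by a dual pair. -/
def comultOf {e c : B} (x : e ⟶ c) (xb : c ⟶ e) (ε : xb ≫ x ⟶ 𝟙 c) :
    x ≫ xb ⟶ (x ≫ xb) ≫ (x ≫ xb) :=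
  (x ◁ ((λ_ xb).inv ≫ (star2 ε ▷ xb) ≫ (α_ xb x xb).hom)) ≫ (α_ x xb (x ≫ xb)).inv

/-- `u` is an isomorphism of Q-systems `(Q, m, i) ≅ (Q', m', i')`: a unitary 2-cell
intertwining the multiplications and the units. -/
def IsQSysIso {b : B} {Q Q' : b ⟶ b} (m : Q ≫ Q ⟶ Q) (i : 𝟙 b ⟶ Q)
    (m' : Q' ≫ Q' ⟶ Q') (i' : 𝟙 b ⟶ Q') (u : Q ⟶ Q') : Prop :=
  IsUnitary u ∧ (m ≫ u = ((u ▷ Q) ≫ (Q' ◁ u)) ≫ m') ∧ (i ≫ u = i')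

/-- A Q-system `(Q, m, i)` splits if it is isomorphic, as a Q-system, to `X ⊠ X̄`
for a 1-cell `X` admitting a unitarily separable dual. -/
def QSystemSplits {b : B} (Q : b ⟶ b) (m : Q ≫ Q ⟶ Q) (i : 𝟙 b ⟶ Q) : Prop :=
  ∃ (c : B) (x : b ⟶ c) (xb : c ⟶ b) (ε : xb ≫ x ⟶ 𝟙 c) (η : 𝟙 b ⟶ x ≫ xb),
    IsUnitarySepDual x xb ε η ∧
    ∃ u : Q ⟶ x ≫ xb, IsQSysIso m i (dualMult x xb ε) η u

end QSystems

/-- A C*-2-category is Q-system complete iff every Q-system in it splits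
(by [CPJP, Theorem 3.36] this is equivalent to the canonical inclusion into the
Q-system completion being a *-equivalence). -/
def QSystemComplete (B : Type u₁) [Bicategory.{w₁, v₁} B] [CStarStruct B] : Prop :=
  ∀ (b : B) (Q : b ⟶ b) (m : Q ≫ Q ⟶ Q) (i : 𝟙 b ⟶ Q),
    IsQSystem Q m i → QSystemSplits Q m i

/-! ### The C*-2-category `Fun(C, D)` of *-2-functors -/

/-- The data of a 2-functor between bicategories: action on 0-, 1-, 2-cells,
tensorators and unitors. -/
structure TwoFunctorData (C : Type u₁) (D : Type u₂)
    [Bicategory.{w₁, v₁} C] [Bicategory.{w₂, v₂} D] where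
  obj : C → D
  map : ∀ {a b : C}, (a ⟶ b) → (obj a ⟶ obj b)
  map2 : ∀ {a b : C} {X Y : a ⟶ b}, (X ⟶ Y) → (map X ⟶ map Y)
  tensorator : ∀ {a b c : C} (X : a ⟶ b) (Y : b ⟶ c), map X ≫ map Y ⟶ map (X ≫ Y)
  unitor : ∀ a : C, 𝟙 (obj a) ⟶ map (𝟙 a)

section Fun

variable {C : Type u₁} {D : Type u₂}
variable [Bicategory.{w₁, v₁} C] [Bicategory.Strict C] [CStarStruct C]
variable [Bicategory.{w₂, v₂} D] [Bicategory.Strict D] [CStarStruct D]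

/-- `F` is a *-2-functor: functorial on hom-categories, star-preserving, with unitary
natural tensorators and unitors satisfying the associativity and unitality coherences. -/
def IsStarTwoFunctor (F : TwoFunctorData C D) : Prop :=
  (∀ {a b : C} (X : a ⟶ b), F.map2 (𝟙 X) = 𝟙 (F.map X)) ∧
  (∀ {a b : C} {X Y Z : a ⟶ b} (f : X ⟶ Y) (g : Y ⟶ Z),
      F.map2 (f ≫ g) = F.map2 f ≫ F.map2 g) ∧
  (∀ {a b : C} {X Y : a ⟶ b} (f : X ⟶ Y), F.map2 (star2 f) = star2 (F.map2 f)) ∧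
  (∀ {a b c : C} (X : a ⟶ b) (Y : b ⟶ c), IsUnitary (F.tensorator X Y)) ∧
  (∀ a : C, IsUnitary (F.unitor a)) ∧
  (∀ {a b c : C} {X X' : a ⟶ b} {Y Y' : b ⟶ c} (f : X ⟶ X') (g : Y ⟶ Y'),
      ((F.map2 f ▷ F.map Y) ≫ (F.map X' ◁ F.map2 g)) ≫ F.tensorator X' Y'
        = F.tensorator X Y ≫ F.map2 ((f ▷ Y) ≫ (X' ◁ g))) ∧
  (∀ {a b c d : C} (X : a ⟶ b) (Y : b ⟶ c) (Z : c ⟶ d),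
      (F.tensorator X Y ▷ F.map Z) ≫ F.tensorator (X ≫ Y) Z ≫ F.map2 (α_ X Y Z).hom
        = (α_ (F.map X) (F.map Y) (F.map Z)).hom ≫ (F.map X ◁ F.tensorator Y Z)
            ≫ F.tensorator X (Y ≫ Z)) ∧
  (∀ {a b : C} (X : a ⟶ b),
      (F.unitor a ▷ F.map X) ≫ F.tensorator (𝟙 a) X ≫ F.map2 (λ_ X).hom
        = (λ_ (F.map X)).hom) ∧
  (∀ {a b : C} (X : a ⟶ b),
      (F.map X ◁ F.unitor b) ≫ F.tensorator X (𝟙 b) ≫ F.map2 (ρ_ X).hom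
        = (ρ_ (F.map X)).hom)

/-- The data of a 2-transformation `φ : F ⇒ G`: 1-cells `φ_a : F(a) ⟶ G(a)` and
2-cells `φ_X : F(X) ⊠ φ_b ⟶ φ_a ⊠ G(X)` (written diagrammatically). -/
structure TransfData (F G : TwoFunctorData C D) where
  app : ∀ a : C, F.obj a ⟶ G.obj a
  natur : ∀ {a b : C} (X : a ⟶ b), F.map X ≫ app b ⟶ app a ≫ G.map X

/-- `φ` is a *-2-transformation: each `φ_X` is unitary, natural in `X`, and coherent
with the tensorators and unitors of `F` and `G`. -/
def IsStarTwoTransf {F G : TwoFunctorData C D} (φ : TransfData F G) : Prop :=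
  (∀ {a b : C} (X : a ⟶ b), IsUnitary (φ.natur X)) ∧
  (∀ {a b : C} {X Y : a ⟶ b} (f : X ⟶ Y),
      (F.map2 f ▷ φ.app b) ≫ φ.natur Y = φ.natur X ≫ (φ.app a ◁ G.map2 f)) ∧
  (∀ {a b c : C} (X : a ⟶ b) (Y : b ⟶ c),
      (F.tensorator X Y ▷ φ.app c) ≫ φ.natur (X ≫ Y)
        = (α_ (F.map X) (F.map Y) (φ.app c)).hom ≫ (F.map X ◁ φ.natur Y)
          ≫ (α_ (F.map X) (φ.app b) (G.map Y)).inv ≫ (φ.natur X ▷ G.map Y)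
          ≫ (α_ (φ.app a) (G.map X) (G.map Y)).hom ≫ (φ.app a ◁ G.tensorator X Y)) ∧
  (∀ a : C,
      (F.unitor a ▷ φ.app a) ≫ φ.natur (𝟙 a)
        = (λ_ (φ.app a)).hom ≫ (ρ_ (φ.app a)).inv ≫ (φ.app a ◁ G.unitor a))

/-- The data of a 2-modification: a family of 2-cells `η_a : φ_a ⟶ ψ_a`. -/
abbrev ModifData {F G : TwoFunctorData C D} (φ ψ : TransfData F G) :=
  ∀ a : C, φ.app a ⟶ ψ.app a

/-- `η` is a 2-modification `φ ⇛ ψ`: uniformly bounded components intertwining the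
half-braidings `φ_X`, `ψ_X`. -/
def IsModification {F G : TwoFunctorData C D} (φ ψ : TransfData F G)
    (η : ModifData φ ψ) : Prop :=
  (∃ M : ℝ, ∀ a : C, norm2 (η a) ≤ M) ∧
  (∀ {a b : C} (X : a ⟶ b),
      (F.map X ◁ η b) ≫ ψ.natur X = φ.natur X ≫ (η a ▷ G.map X))

/-- Horizontal composition of 2-transformations (the tensor product `ψ ⊗ φ` of
1-cells of `Fun(C,D)`, written diagrammatically). -/
def hcompT {F G H : TwoFunctorData C D} (φ : TransfData F G) (χ : TransfData G H) :
    TransfData F H where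
  app a := φ.app a ≫ χ.app a
  natur {a b} X :=
    (α_ (F.map X) (φ.app b) (χ.app b)).inv ≫ (φ.natur X ▷ χ.app b)
      ≫ (α_ (φ.app a) (G.map X) (χ.app b)).hom ≫ (φ.app a ◁ χ.natur X)
      ≫ (α_ (φ.app a) (χ.app a) (H.map X)).inv

/-- The identity 2-transformation `1_F`. -/
def idT (F : TwoFunctorData C D) : TransfData F F where
  app a := 𝟙 (F.obj a)
  natur {a b} X := (ρ_ (F.map X)).hom ≫ (λ_ (F.map X)).inv

/-- A Q-system in `End(F) ⊆ Fun(C,D)`: a *-2-transformation `ψ : F ⇒ F` with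
multiplication and unit 2-modifications whose components form Q-systems in `D`. -/
def IsFunQSystem (F : TwoFunctorData C D) (ψ : TransfData F F)
    (m : ModifData (hcompT ψ ψ) ψ) (i : ModifData (idT F) ψ) : Prop :=
  IsStarTwoTransf ψ ∧ IsModification (hcompT ψ ψ) ψ m ∧ IsModification (idT F) ψ i ∧
  ∀ a : C, IsQSystem (ψ.app a) (m a) (i a)

/-- A Q-system `(ψ, m, i)` in `End(F)` splits in `Fun(C,D)`: there are a *-2-functor `G`,
*-2-transformations `φ : F ⇒ G`, `φ̄ : G ⇒ F` forming a unitarily separable dual pair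
(with evaluation and coevaluation 2-modifications), and a unitary 2-modification
`γ : φ̄ ⊗ φ ⇛ ψ` which is an isomorphism of Q-systems. -/
def FunQSystemSplits (F : TwoFunctorData C D) (ψ : TransfData F F)
    (m : ModifData (hcompT ψ ψ) ψ) (i : ModifData (idT F) ψ) : Prop :=
  ∃ (G : TwoFunctorData C D), IsStarTwoFunctor G ∧
  ∃ (φ : TransfData F G) (φb : TransfData G F),
    IsStarTwoTransf φ ∧ IsStarTwoTransf φb ∧
  ∃ (ev : ∀ a : C, φb.app a ≫ φ.app a ⟶ 𝟙 (G.obj a))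
    (coev : ∀ a : C, 𝟙 (F.obj a) ⟶ φ.app a ≫ φb.app a),
    IsModification (hcompT φb φ) (idT G) ev ∧
    IsModification (idT F) (hcompT φ φb) coev ∧
    (∀ a : C, IsUnitarySepDual (φ.app a) (φb.app a) (ev a) (coev a)) ∧
    ∃ (γ : ∀ a : C, φ.app a ≫ φb.app a ⟶ ψ.app a),
      IsModification (hcompT φ φb) ψ γ ∧
      ∀ a : C, IsQSysIso (dualMult (φ.app a) (φb.app a) (ev a)) (coev a)
        (m a) (i a) (γ a)

end Fun

/-- The C*-2-category `Fun(C,D)` is Q-system complete: every Q-system in it splits. -/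
def FunQSystemComplete (C : Type u₁) (D : Type u₂)
    [Bicategory.{w₁, v₁} C] [Bicategory.Strict C] [CStarStruct C]
    [Bicategory.{w₂, v₂} D] [Bicategory.Strict D] [CStarStruct D] : Prop :=
  ∀ (F : TwoFunctorData C D), IsStarTwoFunctor F →
  ∀ (ψ : TransfData F F) (m : ModifData (hcompT ψ ψ) ψ) (i : ModifData (idT F) ψ),
    IsFunQSystem F ψ m i → FunQSystemSplits F ψ m i

/-- The C*-2-category `Fun(C,D)` is locally orthogonal projection complete: every
projection 2-modification splits by an isometric 2-modification. -/
def FunLocProjComplete (C : Type u₁) (D : Type u₂)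
    [Bicategory.{w₁, v₁} C] [Bicategory.Strict C] [CStarStruct C]
    [Bicategory.{w₂, v₂} D] [Bicategory.Strict D] [CStarStruct D] : Prop :=
  ∀ (F G : TwoFunctorData C D), IsStarTwoFunctor F → IsStarTwoFunctor G →
  ∀ (φ : TransfData F G), IsStarTwoTransf φ →
  ∀ (p : ModifData φ φ), IsModification φ φ p → (∀ a : C, IsProjection (p a)) →
  ∃ (χ : TransfData F G), IsStarTwoTransf χ ∧
  ∃ (v : ModifData χ φ), IsModification χ φ v ∧
    (∀ a : C, v a ≫ star2 (v a) = 𝟙 (χ.app a)) ∧ (∀ a : C, star2 (v a) ≫ v a = p a)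

/-! ### The standing setup

`C`, `D` are strict C*-2-categories, `D` is Q-system complete, `F : C → D` is a
*-2-functor and `(ψ, m, i)` is a Q-system in `End_{Fun(C,D)}(F)`; for each 0-cell `a`
of `C` we fix a splitting of the Q-system `ψ_a` in `D`: a 0-cell `c_a`, a 1-cell
`x_a : F(a) ⟶ c_a` with unitarily separable dual `x̄_a`, evaluation `ε_a`,
coevaluation `η_a`, and a unitary `γ⁽ᵃ⁾ : x̄_a ⊠ x_a ⟶ ψ_a` intertwining the
multiplications and units. -/
structure Setup (C : Type u₁) (D : Type u₂)
    [Bicategory.{w₁, v₁} C] [Bicategory.Strict C] [CStarStruct C]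
    [Bicategory.{w₂, v₂} D] [Bicategory.Strict D] [CStarStruct D] where
  locC : LocProjComplete C
  locD : LocProjComplete D
  complD : QSystemComplete D
  F : TwoFunctorData C D
  hF : IsStarTwoFunctor F
  ψ : TransfData F F
  hψ : IsStarTwoTransf ψ
  m : ModifData (hcompT ψ ψ) ψ
  i : ModifData (idT F) ψ
  hm : IsModification (hcompT ψ ψ) ψ m
  hi : IsModification (idT F) ψ i
  hQ : ∀ a : C, IsQSystem (ψ.app a) (m a) (i a)
  cc : C → D
  x : ∀ a : C, F.obj a ⟶ cc a
  xb : ∀ a : C, cc a ⟶ F.obj a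
  ε : ∀ a : C, xb a ≫ x a ⟶ 𝟙 (cc a)
  η : ∀ a : C, 𝟙 (F.obj a) ⟶ x a ≫ xb a
  hdual : ∀ a : C, IsUnitarySepDual (x a) (xb a) (ε a) (η a)
  γ : ∀ a : C, x a ≫ xb a ⟶ ψ.app a
  hγu : ∀ a : C, IsUnitary (γ a)
  hγm : ∀ a : C,
    dualMult (x a) (xb a) (ε a) ≫ γ a
      = ((γ a ▷ (x a ≫ xb a)) ≫ (ψ.app a ◁ γ a)) ≫ m a
  hγi : ∀ a : C, η a ≫ γ a = i a

namespace Setup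

variable {C : Type u₁} {D : Type u₂}
variable [Bicategory.{w₁, v₁} C] [Bicategory.Strict C] [CStarStruct C]
variable [Bicategory.{w₂, v₂} D] [Bicategory.Strict D] [CStarStruct D]

/-- The 2-cell `p_X ∈ End(x_b ⊠ F(X) ⊠ x̄_a)`, namely
`(ε_b ⊠ id) ∘ (id ⊠ γ⁽ᵇ⁾* ⊠ id) ∘ (id ⊠ ψ_X* ⊠ id) ∘ (id ⊠ γ⁽ᵃ⁾ ⊠ id) ∘ (id ⊠ ε_a*)`. -/
def p (S : Setup C D) {a b : C} (X : a ⟶ b) :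
    S.xb a ≫ S.F.map X ≫ S.x b ⟶ S.xb a ≫ S.F.map X ≫ S.x b :=
  (λ_ (S.xb a ≫ S.F.map X ≫ S.x b)).inv
    ≫ (star2 (S.ε a) ▷ (S.xb a ≫ S.F.map X ≫ S.x b))
    ≫ (α_ (S.xb a) (S.x a) (S.xb a ≫ S.F.map X ≫ S.x b)).hom
    ≫ (S.xb a ◁ (α_ (S.x a) (S.xb a) (S.F.map X ≫ S.x b)).inv)
    ≫ (S.xb a ◁ (S.γ a ▷ (S.F.map X ≫ S.x b)))
    ≫ (S.xb a ◁ (α_ (S.ψ.app a) (S.F.map X) (S.x b)).inv)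
    ≫ (S.xb a ◁ (star2 (S.ψ.natur X) ▷ S.x b))
    ≫ (S.xb a ◁ (α_ (S.F.map X) (S.ψ.app b) (S.x b)).hom)
    ≫ (S.xb a ◁ (S.F.map X ◁ (star2 (S.γ b) ▷ S.x b)))
    ≫ (S.xb a ◁ (S.F.map X ◁ (α_ (S.x b) (S.xb b) (S.x b)).hom))
    ≫ (S.xb a ◁ (S.F.map X ◁ (S.x b ◁ S.ε b)))
    ≫ (S.xb a ◁ (S.F.map X ◁ (ρ_ (S.x b)).hom))

/-- The 2-cell `p_{X,Y} ∈ End(x_b ⊠ F(X) ⊠ F(Y) ⊠ x̄_c)` obtained like `p_X` but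
passing `ψ` through both `F(X)` and `F(Y)`. -/
def p2 (S : Setup C D) {a b c : C} (X : a ⟶ b) (Y : b ⟶ c) :
    S.xb a ≫ S.F.map X ≫ S.F.map Y ≫ S.x c
      ⟶ S.xb a ≫ S.F.map X ≫ S.F.map Y ≫ S.x c :=
  (λ_ (S.xb a ≫ S.F.map X ≫ S.F.map Y ≫ S.x c)).inv
    ≫ (star2 (S.ε a) ▷ (S.xb a ≫ S.F.map X ≫ S.F.map Y ≫ S.x c))
    ≫ (α_ (S.xb a) (S.x a) (S.xb a ≫ S.F.map X ≫ S.F.map Y ≫ S.x c)).hom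
    ≫ (S.xb a ◁ (α_ (S.x a) (S.xb a) (S.F.map X ≫ S.F.map Y ≫ S.x c)).inv)
    ≫ (S.xb a ◁ (S.γ a ▷ (S.F.map X ≫ S.F.map Y ≫ S.x c)))
    ≫ (S.xb a ◁ (α_ (S.ψ.app a) (S.F.map X) (S.F.map Y ≫ S.x c)).inv)
    ≫ (S.xb a ◁ (star2 (S.ψ.natur X) ▷ (S.F.map Y ≫ S.x c)))
    ≫ (S.xb a ◁ (α_ (S.F.map X) (S.ψ.app b) (S.F.map Y ≫ S.x c)).hom)
    ≫ (S.xb a ◁ (S.F.map X ◁ (α_ (S.ψ.app b) (S.F.map Y) (S.x c)).inv))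
    ≫ (S.xb a ◁ (S.F.map X ◁ (star2 (S.ψ.natur Y) ▷ S.x c)))
    ≫ (S.xb a ◁ (S.F.map X ◁ (α_ (S.F.map Y) (S.ψ.app c) (S.x c)).hom))
    ≫ (S.xb a ◁ (S.F.map X ◁ (S.F.map Y ◁ (star2 (S.γ c) ▷ S.x c))))
    ≫ (S.xb a ◁ (S.F.map X ◁ (S.F.map Y ◁ (α_ (S.x c) (S.xb c) (S.x c)).hom)))
    ≫ (S.xb a ◁ (S.F.map X ◁ (S.F.map Y ◁ (S.x c ◁ S.ε c))))
    ≫ (S.xb a ◁ (S.F.map X ◁ (S.F.map Y ◁ (ρ_ (S.x c)).hom)))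

end Setup

/-- A choice, for every 1-cell `X` of `C`, of a splitting `u_X : G(X) ⟶ x_b ⊠ F(X) ⊠ x̄_a`
of the projection `p_X` (possible since `D` is locally orthogonal projection complete),
normalized on identity 1-cells as in the paper: `G(1_a) = 1_{c_a}` and
`u_{1_a} = (id ⊠ F¹_a ⊠ id) ∘ ε_a*`. -/
structure GData {C : Type u₁} {D : Type u₂}
    [Bicategory.{w₁, v₁} C] [Bicategory.Strict C] [CStarStruct C]
    [Bicategory.{w₂, v₂} D] [Bicategory.Strict D] [CStarStruct D]
    (S : Setup C D) where
  G1 : ∀ {a b : C}, (a ⟶ b) → (S.cc a ⟶ S.cc b)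
  u : ∀ {a b : C} (X : a ⟶ b), G1 X ⟶ S.xb a ≫ S.F.map X ≫ S.x b
  hu_isometry : ∀ {a b : C} (X : a ⟶ b), u X ≫ star2 (u X) = 𝟙 (G1 X)
  hu_proj : ∀ {a b : C} (X : a ⟶ b), star2 (u X) ≫ u X = S.p X
  hG1_id : ∀ a : C, G1 (𝟙 a) = 𝟙 (S.cc a)
  hu_id : ∀ a : C,
    u (𝟙 a) = eqToHom (hG1_id a) ≫ star2 (S.ε a)
      ≫ (S.xb a ◁ ((λ_ (S.x a)).inv ≫ (S.F.unitor a ▷ S.x a)))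

namespace GData

variable {C : Type u₁} {D : Type u₂}
variable [Bicategory.{w₁, v₁} C] [Bicategory.Strict C] [CStarStruct C]
variable [Bicategory.{w₂, v₂} D] [Bicategory.Strict D] [CStarStruct D]
variable {S : Setup C D}

/-- `G` on 2-cells: `G(f) := u_Y* ∘ (id ⊠ F(f) ⊠ id) ∘ u_X`. -/
def Gmap2 (E : GData S) {a b : C} {X Y : a ⟶ b} (f : X ⟶ Y) : E.G1 X ⟶ E.G1 Y :=
  E.u X ≫ (S.xb a ◁ (S.F.map2 f ▷ S.x b)) ≫ star2 (E.u Y)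

/-- The tensorator of `G`:
`G²_{X,Y} := u_{X⊠Y}* ∘ (id ⊠ F² ⊠ id) ∘ (id ⊠ η* ⊠ id) ∘ (u_X ⊠ u_Y)`. -/
def Gtensor (E : GData S) {a b c : C} (X : a ⟶ b) (Y : b ⟶ c) :
    E.G1 X ≫ E.G1 Y ⟶ E.G1 (X ≫ Y) :=
  (E.u X ▷ E.G1 Y)
    ≫ ((S.xb a ≫ S.F.map X ≫ S.x b) ◁ E.u Y)
    ≫ (α_ (S.xb a) (S.F.map X ≫ S.x b) (S.xb b ≫ S.F.map Y ≫ S.x c)).hom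
    ≫ (S.xb a ◁ (α_ (S.F.map X) (S.x b) (S.xb b ≫ S.F.map Y ≫ S.x c)).hom)
    ≫ (S.xb a ◁ (S.F.map X ◁ (α_ (S.x b) (S.xb b) (S.F.map Y ≫ S.x c)).inv))
    ≫ (S.xb a ◁ (S.F.map X ◁ (star2 (S.η b) ▷ (S.F.map Y ≫ S.x c))))
    ≫ (S.xb a ◁ (S.F.map X ◁ (λ_ (S.F.map Y ≫ S.x c)).hom))
    ≫ (S.xb a ◁ (α_ (S.F.map X) (S.F.map Y) (S.x c)).inv)
    ≫ (S.xb a ◁ (S.F.tensorator X Y ▷ S.x c))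
    ≫ star2 (E.u (X ≫ Y))

/-- The full 2-functor data of `G`. -/
def toFunctor (E : GData S) : TwoFunctorData C D where
  obj a := S.cc a
  map X := E.G1 X
  map2 f := E.Gmap2 f
  tensorator X Y := E.Gtensor X Y
  unitor a := eqToHom (E.hG1_id a).symm

/-- The components of the 2-transformation `φ : F ⇒ G`:
`φ_X := (u_X* ⊠ id_{x_a}) ∘ (id ⊠ η_a)`. -/
def φnat (E : GData S) {a b : C} (X : a ⟶ b) :
    S.F.map X ≫ S.x b ⟶ S.x a ≫ E.G1 X :=
  (λ_ (S.F.map X ≫ S.x b)).inv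
    ≫ (S.η a ▷ (S.F.map X ≫ S.x b))
    ≫ (α_ (S.x a) (S.xb a) (S.F.map X ≫ S.x b)).hom
    ≫ (S.x a ◁ star2 (E.u X))

/-- The components of the 2-transformation `φ̄ : G ⇒ F`:
`φ̄_X := (η_b* ⊠ id) ∘ (id_{x̄_b} ⊠ u_X)`. -/
def φbnat (E : GData S) {a b : C} (X : a ⟶ b) :
    E.G1 X ≫ S.xb b ⟶ S.xb a ≫ S.F.map X :=
  (E.u X ▷ S.xb b)
    ≫ (α_ (S.xb a) (S.F.map X ≫ S.x b) (S.xb b)).hom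
    ≫ (S.xb a ◁ (α_ (S.F.map X) (S.x b) (S.xb b)).hom)
    ≫ (S.xb a ◁ (S.F.map X ◁ star2 (S.η b)))
    ≫ (S.xb a ◁ (ρ_ (S.F.map X)).hom)

/-- The 2-transformation `φ : F ⇒ G`, with `φ_a := x_a`. -/
def φT (E : GData S) : TransfData S.F E.toFunctor where
  app a := S.x a
  natur {a b} X := E.φnat X

/-- The 2-transformation `φ̄ : G ⇒ F`, with `φ̄_a := x̄_a`. -/
def φbT (E : GData S) : TransfData E.toFunctor S.F where
  app a := S.xb a
  natur {a b} X := E.φbnat X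

end GData

/-!
Unitarity of `γ` gives the norm bound, and together with the intertwining of the
multiplications and units it is the Q-system isomorphism. For the naturality square,
substitute `p_X` for `u_X* u_X`: transported along `γ`, the cup `η_a` followed by `ε_a*`
becomes the comultiplication `m_a* i_a` of `ψ_a`, and `ε_b` followed by `η_b*` becomes
`i_b* m_b`. What is left is a diagram in `ψ` alone, which the modification property of
`m` and `i`, Frobenius and unitality collapse to `ψ_X`.
-/

local infixr:80 " ⊗≫ " => CategoryTheory.bicategoricalComp

section Star

variable {B : Type u₂} [Bicategory.{w₂, v₂} B] [CStarStruct B]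

lemma star2_eqToHom {a b : B} {f g : a ⟶ b} (h : f = g) :
    star2 (eqToHom h) = eqToHom h.symm := by
  subst h
  exact CStarStruct.star_id f

variable [Bicategory.Strict B]

@[simp]
lemma star2_associator_hom {a b c d : B} (f : a ⟶ b) (g : b ⟶ c) (h : c ⟶ d) :
    star2 (α_ f g h).hom = (α_ f g h).inv := by
  simp only [Bicategory.Strict.associator_eqToIso, eqToIso.hom, eqToIso.inv, star2_eqToHom]

@[simp]
lemma star2_associator_inv {a b c d : B} (f : a ⟶ b) (g : b ⟶ c) (h : c ⟶ d) :
    star2 (α_ f g h).inv = (α_ f g h).hom := by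
  simp only [Bicategory.Strict.associator_eqToIso, eqToIso.hom, eqToIso.inv, star2_eqToHom]

@[simp]
lemma star2_leftUnitor_hom {a b : B} (f : a ⟶ b) : star2 (λ_ f).hom = (λ_ f).inv := by
  simp only [Bicategory.Strict.leftUnitor_eqToIso, eqToIso.hom, eqToIso.inv, star2_eqToHom]

@[simp]
lemma star2_leftUnitor_inv {a b : B} (f : a ⟶ b) : star2 (λ_ f).inv = (λ_ f).hom := by
  simp only [Bicategory.Strict.leftUnitor_eqToIso, eqToIso.hom, eqToIso.inv, star2_eqToHom]

@[simp]
lemma star2_rightUnitor_hom {a b : B} (f : a ⟶ b) : star2 (ρ_ f).hom = (ρ_ f).inv := by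
  simp only [Bicategory.Strict.rightUnitor_eqToIso, eqToIso.hom, eqToIso.inv, star2_eqToHom]

end Star

section Unitary

variable {B : Type u₂} [Bicategory.{w₂, v₂} B] [CStarStruct B]

lemma norm2_id_le_one {a b : B} (f : a ⟶ b) : norm2 (𝟙 f) ≤ 1 := by
  have hsq : norm2 (𝟙 f) * norm2 (𝟙 f) = norm2 (𝟙 f) := by
    conv_lhs => rw [← CStarStruct.nrm_cstar (𝟙 f), CStarStruct.star_id, Category.comp_id]
  nlinarith [CStarStruct.nrm_nonneg (𝟙 f)]

lemma IsUnitary.norm2_le_one {a b : B} {f g : a ⟶ b} {u : f ⟶ g} (hu : IsUnitary u) :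
    norm2 u ≤ 1 := by
  have hsq : norm2 u * norm2 u = norm2 (𝟙 f) := by
    rw [← CStarStruct.nrm_cstar u, hu.1]
  nlinarith [CStarStruct.nrm_nonneg u, norm2_id_le_one f]

end Unitary

namespace IsQSysIso

variable {B : Type u₂} [Bicategory.{w₂, v₂} B] [CStarStruct B]
variable {e c : B} {x : e ⟶ c} {xb : c ⟶ e} {ε : xb ≫ x ⟶ 𝟙 c} {η : 𝟙 e ⟶ x ≫ xb}
  {ψ : e ⟶ e} {m : ψ ≫ ψ ⟶ ψ} {i : 𝟙 e ⟶ ψ} {γ : x ≫ xb ⟶ ψ}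

lemma star_coev (h : IsQSysIso (dualMult x xb ε) η m i γ) : star2 η = γ ≫ star2 i := by
  rw [← h.2.2]
  simp only [CStarStruct.star_comp]
  rw [← Category.assoc, h.1.1, Category.id_comp]

lemma ev_starCoev (h : IsQSysIso (dualMult x xb ε) η m i γ) :
    star2 γ ▷ (x ≫ xb) ⊗≫ x ◁ ε ▷ xb ⊗≫ star2 η = ψ ◁ γ ⊗≫ m ≫ star2 i := by
  calc star2 γ ▷ (x ≫ xb) ⊗≫ x ◁ ε ▷ xb ⊗≫ star2 η
      = star2 γ ▷ (x ≫ xb) ⊗≫ (dualMult x xb ε ≫ γ) ≫ star2 i := by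
        rw [h.star_coev]
        simp only [dualMult]
        bicategory
    _ = (star2 γ ≫ γ) ▷ (x ≫ xb) ⊗≫ ψ ◁ γ ⊗≫ m ≫ star2 i := by
        rw [h.2.1]
        bicategory
    _ = ψ ◁ γ ⊗≫ m ≫ star2 i := by
        rw [h.1.2]
        bicategory

variable [Bicategory.Strict B]

lemma star_mult (h : IsQSysIso (dualMult x xb ε) η m i γ) :
    star2 γ ⊗≫ x ◁ star2 ε ▷ xb ⊗≫ γ ▷ (x ≫ xb) ⊗≫ ψ ◁ γ = star2 m := by
  calc star2 γ ⊗≫ x ◁ star2 ε ▷ xb ⊗≫ γ ▷ (x ≫ xb) ⊗≫ ψ ◁ γ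
      = star2 (dualMult x xb ε ≫ γ) ⊗≫ γ ▷ (x ≫ xb) ⊗≫ ψ ◁ γ := by
        simp only [dualMult, CStarStruct.star_comp, CStarStruct.star_whiskerLeft,
          CStarStruct.star_whiskerRight, star2_associator_hom, star2_associator_inv,
          star2_leftUnitor_hom]
        bicategory
    _ = star2 m ⊗≫ ψ ◁ star2 γ ⊗≫ (star2 γ ≫ γ) ▷ (x ≫ xb) ⊗≫ ψ ◁ γ := by
        rw [h.2.1]
        simp only [CStarStruct.star_comp, CStarStruct.star_whiskerLeft,
          CStarStruct.star_whiskerRight]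
        bicategory
    _ = star2 m ⊗≫ ψ ◁ (star2 γ ≫ γ) := by
        rw [Bicategory.whiskerLeft_comp, h.1.2]
        bicategory
    _ = star2 m := by
        rw [h.1.2]
        bicategory

lemma coev_comult (h : IsQSysIso (dualMult x xb ε) η m i γ) :
    η ⊗≫ x ◁ star2 ε ▷ xb ⊗≫ γ ▷ (x ≫ xb) ⊗≫ ψ ◁ γ = i ≫ star2 m := by
  calc η ⊗≫ x ◁ star2 ε ▷ xb ⊗≫ γ ▷ (x ≫ xb) ⊗≫ ψ ◁ γ
      = (η ≫ γ ≫ star2 γ) ⊗≫ x ◁ star2 ε ▷ xb ⊗≫ γ ▷ (x ≫ xb) ⊗≫ ψ ◁ γ := by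
        rw [h.1.1]
        bicategory
    _ = (η ≫ γ) ≫ (star2 γ ⊗≫ x ◁ star2 ε ▷ xb ⊗≫ γ ▷ (x ≫ xb) ⊗≫ ψ ◁ γ) := by
        bicategory
    _ = i ≫ star2 m := by
        rw [h.2.2, h.star_mult]

end IsQSysIso

section Splitting

variable {B : Type u₂} [Bicategory.{w₂, v₂} B] [Bicategory.Strict B] [CStarStruct B]

lemma halfBraiding_eq_of_isQSystem {a b : B} (f : a ⟶ b) {ψa : a ⟶ a} {ψb : b ⟶ b}
    {ψX : f ≫ ψb ⟶ ψa ≫ f} {ma : ψa ≫ ψa ⟶ ψa} {ia : 𝟙 a ⟶ ψa} {mb : ψb ≫ ψb ⟶ ψb}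
    {ib : 𝟙 b ⟶ ψb} (hψX : IsUnitary ψX) (hψa : IsQSystem ψa ma ia)
    (hmX : (f ◁ mb) ≫ ψX
      = ((α_ f ψb ψb).inv ≫ (ψX ▷ ψb) ≫ (α_ ψa f ψb).hom ≫ (ψa ◁ ψX) ≫ (α_ ψa ψa f).inv)
        ≫ (ma ▷ f))
    (hiX : (f ◁ ib) ≫ ψX = ((ρ_ f).hom ≫ (λ_ f).inv) ≫ (ia ▷ f)) :
    𝟙 (f ≫ ψb) ⊗≫ (ia ≫ star2 ma) ▷ (f ≫ ψb) ⊗≫ ψa ◁ star2 ψX ▷ ψb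
      ⊗≫ ψa ◁ f ◁ (mb ≫ star2 ib) ⊗≫ 𝟙 (ψa ≫ f) = ψX := by
  obtain ⟨-, hlunit, hrunit, hfrob, -, -⟩ := hψa
  have hmX' : f ◁ mb = (α_ f ψb ψb).inv ≫ (ψX ▷ ψb) ≫ (α_ ψa f ψb).hom ≫ (ψa ◁ ψX)
      ≫ (α_ ψa ψa f).inv ≫ (ma ▷ f) ≫ star2 ψX := by
    rw [← reassoc_of% hmX, hψX.1, Category.comp_id]
  have hiX' : star2 ψX ≫ (f ◁ star2 ib) = (star2 ia ▷ f) ≫ (λ_ f).hom ≫ (ρ_ f).inv := by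
    simpa only [CStarStruct.star_comp, CStarStruct.star_whiskerLeft,
      CStarStruct.star_whiskerRight, star2_leftUnitor_inv, star2_rightUnitor_hom,
      Category.assoc] using congrArg star2 hiX
  have hrunit' : star2 ma ≫ (ψa ◁ star2 ia) = (ρ_ ψa).inv := by
    simpa only [CStarStruct.star_comp, CStarStruct.star_whiskerLeft,
      star2_rightUnitor_hom] using congrArg star2 hrunit
  calc 𝟙 (f ≫ ψb) ⊗≫ (ia ≫ star2 ma) ▷ (f ≫ ψb) ⊗≫ ψa ◁ star2 ψX ▷ ψb
        ⊗≫ ψa ◁ f ◁ (mb ≫ star2 ib) ⊗≫ 𝟙 (ψa ≫ f)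
      = 𝟙 (f ≫ ψb) ⊗≫ (ia ≫ star2 ma) ▷ (f ≫ ψb) ⊗≫ ψa ◁ (star2 ψX ≫ ψX) ▷ ψb
          ⊗≫ ψa ◁ ψa ◁ ψX ⊗≫ ψa ◁ ma ▷ f ⊗≫ ψa ◁ (star2 ψX ≫ f ◁ star2 ib)
          ⊗≫ 𝟙 (ψa ≫ f) := by
        rw [Bicategory.whiskerLeft_comp f mb, hmX']
        bicategory
    _ = 𝟙 (f ≫ ψb) ⊗≫ ((ia ≫ star2 ma) ▷ (f ≫ ψb) ≫ (ψa ≫ ψa) ◁ ψX)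
          ⊗≫ ψa ◁ ma ▷ f ⊗≫ ψa ◁ star2 ia ▷ f ⊗≫ 𝟙 (ψa ≫ f) := by
        rw [hψX.2, hiX']
        bicategory
    _ = ψX ⊗≫ (ia ▷ ψa ⊗≫ (star2 ma ▷ ψa ≫ (α_ ψa ψa ψa).hom ≫ ψa ◁ ma)
          ⊗≫ ψa ◁ star2 ia) ▷ f ⊗≫ 𝟙 (ψa ≫ f) := by
        rw [← Bicategory.whisker_exchange]
        bicategory
    _ = ψX ⊗≫ ((ia ▷ ψa ≫ ma) ≫ (star2 ma ≫ ψa ◁ star2 ia)) ▷ f ⊗≫ 𝟙 (ψa ≫ f) := by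
        rw [← hfrob]
        bicategory
    _ = ψX := by
        rw [hlunit, hrunit']
        bicategory

lemma natur_comp_gamma_of_splitting {Fa Fb ca cb : B} (f : Fa ⟶ Fb)
    {x : Fa ⟶ ca} {xb : ca ⟶ Fa} {y : Fb ⟶ cb} {yb : cb ⟶ Fb} {ψa : Fa ⟶ Fa} {ψb : Fb ⟶ Fb}
    {εa : xb ≫ x ⟶ 𝟙 ca} {ηa : 𝟙 Fa ⟶ x ≫ xb} {εb : yb ≫ y ⟶ 𝟙 cb} {ηb : 𝟙 Fb ⟶ y ≫ yb}
    {ma : ψa ≫ ψa ⟶ ψa} {ia : 𝟙 Fa ⟶ ψa} {mb : ψb ≫ ψb ⟶ ψb} {ib : 𝟙 Fb ⟶ ψb}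
    {γa : x ≫ xb ⟶ ψa} {γb : y ≫ yb ⟶ ψb} {ψX : f ≫ ψb ⟶ ψa ≫ f}
    {g : ca ⟶ cb} {u : g ⟶ xb ≫ f ≫ y}
    (hγa : IsQSysIso (dualMult x xb εa) ηa ma ia γa)
    (hγb : IsQSysIso (dualMult y yb εb) ηb mb ib γb)
    (hψX : IsUnitary ψX) (hψa : IsQSystem ψa ma ia)
    (hmX : (f ◁ mb) ≫ ψX
      = ((α_ f ψb ψb).inv ≫ (ψX ▷ ψb) ≫ (α_ ψa f ψb).hom ≫ (ψa ◁ ψX) ≫ (α_ ψa ψa f).inv)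
        ≫ (ma ▷ f))
    (hiX : (f ◁ ib) ≫ ψX = ((ρ_ f).hom ≫ (λ_ f).inv) ≫ (ia ▷ f))
    (hu : star2 u ≫ u =
      (λ_ (xb ≫ f ≫ y)).inv ≫ (star2 εa ▷ (xb ≫ f ≫ y)) ≫ (α_ xb x (xb ≫ f ≫ y)).hom
        ≫ (xb ◁ (α_ x xb (f ≫ y)).inv) ≫ (xb ◁ (γa ▷ (f ≫ y))) ≫ (xb ◁ (α_ ψa f y).inv)
        ≫ (xb ◁ (star2 ψX ▷ y)) ≫ (xb ◁ (α_ f ψb y).hom) ≫ (xb ◁ (f ◁ (star2 γb ▷ y)))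
        ≫ (xb ◁ (f ◁ (α_ y yb y).hom)) ≫ (xb ◁ (f ◁ (y ◁ εb))) ≫ (xb ◁ (f ◁ (ρ_ y).hom))) :
    (α_ f y yb).inv
      ≫ (((λ_ (f ≫ y)).inv ≫ (ηa ▷ (f ≫ y)) ≫ (α_ x xb (f ≫ y)).hom ≫ (x ◁ star2 u)) ▷ yb)
      ≫ (α_ x g yb).hom
      ≫ (x ◁ ((u ▷ yb) ≫ (α_ xb (f ≫ y) yb).hom ≫ (xb ◁ (α_ f y yb).hom)
            ≫ (xb ◁ (f ◁ star2 ηb)) ≫ (xb ◁ (ρ_ f).hom)))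
      ≫ (α_ x xb f).inv ≫ (γa ▷ f)
    = (f ◁ γb) ≫ ψX := by
  let block : f ⟶ x ≫ xb ≫ f ≫ ψb :=
    𝟙 f ⊗≫ ηa ▷ f ⊗≫ x ◁ star2 εa ▷ (xb ≫ f) ⊗≫ (x ≫ xb) ◁ (γa ▷ f ≫ star2 ψX) ⊗≫ 𝟙 _
  let rest : (x ≫ xb) ≫ f ≫ ψb ⟶ f :=
    γa ▷ (f ≫ ψb) ⊗≫ star2 ψX ▷ ψb ⊗≫ f ◁ (mb ≫ star2 ib) ⊗≫ 𝟙 f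
  calc _ = 𝟙 (f ≫ y ≫ yb) ⊗≫ ηa ▷ (f ≫ y ≫ yb) ⊗≫ x ◁ (star2 u ≫ u) ▷ yb
          ⊗≫ x ◁ xb ◁ f ◁ star2 ηb ⊗≫ γa ▷ f := by
        bicategory
    _ = 𝟙 (f ≫ y ≫ yb) ⊗≫ block ▷ (y ≫ yb)
          ⊗≫ (x ≫ xb ≫ f) ◁ (ψb ◁ γb ⊗≫ mb ≫ star2 ib) ⊗≫ γa ▷ f := by
        rw [hu, ← hγb.ev_starCoev]
        bicategory
    _ = 𝟙 (f ≫ y ≫ yb) ⊗≫ (block ▷ (y ≫ yb) ≫ (x ≫ xb ≫ f ≫ ψb) ◁ γb)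
          ⊗≫ (x ≫ xb ≫ f) ◁ (mb ≫ star2 ib) ⊗≫ γa ▷ f := by
        bicategory
    _ = f ◁ γb ⊗≫ (ηa ⊗≫ x ◁ star2 εa ▷ xb) ▷ (f ≫ ψb) ⊗≫ ((x ≫ xb) ◁ rest ≫ γa ▷ f) := by
        rw [← Bicategory.whisker_exchange]
        bicategory
    _ = f ◁ γb ⊗≫ (ηa ⊗≫ x ◁ star2 εa ▷ xb ⊗≫ γa ▷ (x ≫ xb) ⊗≫ ψa ◁ γa) ▷ (f ≫ ψb)
          ⊗≫ ψa ◁ star2 ψX ▷ ψb ⊗≫ ψa ◁ f ◁ (mb ≫ star2 ib) ⊗≫ 𝟙 (ψa ≫ f) := by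
        rw [Bicategory.whisker_exchange]
        bicategory
    _ = f ◁ γb ⊗≫ (𝟙 (f ≫ ψb) ⊗≫ (ia ≫ star2 ma) ▷ (f ≫ ψb) ⊗≫ ψa ◁ star2 ψX ▷ ψb
          ⊗≫ ψa ◁ f ◁ (mb ≫ star2 ib) ⊗≫ 𝟙 (ψa ≫ f)) := by
        rw [hγa.coev_comult]
        bicategory
    _ = (f ◁ γb) ≫ ψX := by
        rw [halfBraiding_eq_of_isQSystem f hψX hψa hmX hiX]
        bicategory

end Splitting

variable {C : Type u₁} {D : Type u₂}
variable [Bicategory.{w₁, v₁} C] [Bicategory.Strict C] [CStarStruct C]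
variable [Bicategory.{w₂, v₂} D] [Bicategory.Strict D] [CStarStruct D]

lemma Setup.isQSysIso_gamma (S : Setup C D) (a : C) :
    IsQSysIso (dualMult (S.x a) (S.xb a) (S.ε a)) (S.η a) (S.m a) (S.i a) (S.γ a) :=
  ⟨S.hγu a, S.hγm a, S.hγi a⟩

lemma GData.natur_comp_gamma {S : Setup C D} (E : GData S) {a b : C} (X : a ⟶ b) :
    (α_ (S.F.map X) (S.x b) (S.xb b)).inv ≫ (E.φnat X ▷ S.xb b)
        ≫ (α_ (S.x a) (E.G1 X) (S.xb b)).hom ≫ (S.x a ◁ E.φbnat X)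
        ≫ (α_ (S.x a) (S.xb a) (S.F.map X)).inv ≫ (S.γ a ▷ S.F.map X)
      = (S.F.map X ◁ S.γ b) ≫ S.ψ.natur X :=
  natur_comp_gamma_of_splitting (S.F.map X) (S.isQSysIso_gamma a) (S.isQSysIso_gamma b)
    (S.hψ.1 X) (S.hQ a) (S.hm.2 X) (S.hi.2 X) (E.hu_proj X)

/-- In the standing setup with `G`, `u_X`, `φ` and `φ̄` as defined,
the family `γ = (γ⁽ᵃ⁾)` is a unitary 2-modification `φ̄ ⊗ φ ⇛ ψ`, i.e. its norms
are uniformly bounded and for every 1-cell `X ∈ C₁(a,b)`,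
`(id_{F(X)} ⊠ γ_a) ∘ (φ̄_X ⊠ id_{x_a}) ∘ (id_{x̄_b} ⊠ φ_X) = ψ_X ∘ (γ_b ⊠ id_{F(X)})`;
since `γ` also intertwines the multiplications and units, `(ψ, m, i)` and `φ̄ ⊗ φ`
(with multiplication `id_φ̄ ⊗ ε ⊗ id_φ` and unit `η`) are isomorphic as Q-systems
in `End_{Fun(C,D)}(F)`. -/
theorem gamma_qsystem_isomorphism
    {C : Type u₁} {D : Type u₂}
    [Bicategory.{w₁, v₁} C] [Bicategory.Strict C] [CStarStruct C]
    [Bicategory.{w₂, v₂} D] [Bicategory.Strict D] [CStarStruct D]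
    (S : Setup C D) (E : GData S) :
    (∃ M : ℝ, ∀ a : C, norm2 (S.γ a) ≤ M) ∧
    (∀ {a b : C} (X : a ⟶ b),
        (α_ (S.F.map X) (S.x b) (S.xb b)).inv
            ≫ (E.φnat X ▷ S.xb b)
            ≫ (α_ (S.x a) (E.G1 X) (S.xb b)).hom
            ≫ (S.x a ◁ E.φbnat X)
            ≫ (α_ (S.x a) (S.xb a) (S.F.map X)).inv
            ≫ (S.γ a ▷ S.F.map X)
          = (S.F.map X ◁ S.γ b) ≫ S.ψ.natur X) ∧
    IsModification (hcompT E.φT E.φbT) S.ψ S.γ ∧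
    (∀ a : C, IsQSysIso (dualMult (S.x a) (S.xb a) (S.ε a)) (S.η a)
        (S.m a) (S.i a) (S.γ a)) := by
  have hbound : ∃ M : ℝ, ∀ a : C, norm2 (S.γ a) ≤ M := ⟨1, fun a => (S.hγu a).norm2_le_one⟩
  refine ⟨hbound, E.natur_comp_gamma, ⟨hbound, fun X => ?_⟩, S.isQSysIso_gamma⟩
  dsimp only [hcompT, GData.φT, GData.φbT, GData.toFunctor]
  simpa only [Category.assoc] using (E.natur_comp_gamma X).symm
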